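/- arXiv:gr-qc/0511135 — 6 statements merged into one kernel-verified Lean document; each statement's English description precedes it below -/
import Mathlib

section
/- On the open set U = {(t,r,θ,φ) ∈ ℝ⁴ : r > r₊, 0 < θ < π}, the smooth vector fields E₀, E₁, E₂, E₃ (viewed as maps U → ℝ⁴) have Lie brackets [V,W](x) = DW(x)·V(x) − DV(x)·W(x) given by: [E₀,E₁] = 0; [E₀,E₂] = −(a² cos θ sin θ/ρ³) E₀; [E₀,E₃] = ((r−m)/(ρ√Δ) − r√Δ/ρ³) E₀ + (2ar sin θ/ρ³) E₁; [E₁,E₂] = ((ρ² + a² sin²θ) cos θ/(ρ³ sin θ)) E₁ − (2a√Δ cos θ/ρ³) E₀; [E₁,E₃] = (r√Δ/ρ³) E₁; [E₂,E₃] = (r√Δ/ρ³) E₂ + (a² cos θ sin θ/ρ³) E₃. -/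
noncomputable section

open Real

/-- Δ = r² − 2mr + a² + q² -/
def Delta (m a q r : ℝ) : ℝ := r ^ 2 - 2 * m * r + a ^ 2 + q ^ 2

/-- ρ² = r² + a² cos²θ -/
def rhoSq (a r θ : ℝ) : ℝ := r ^ 2 + a ^ 2 * Real.cos θ ^ 2

/-- r₊ = m + √(m² − a² − q²) -/
def rPlus (m a q : ℝ) : ℝ := m + Real.sqrt (m ^ 2 - a ^ 2 - q ^ 2)

/-- The vector field E₀, as a map ℝ⁴ → ℝ⁴; coordinates (t, r, θ, φ) indexed by 0,1,2,3,
so that x 1 = r and x 2 = θ. -/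
def E0 (m a q : ℝ) (x : Fin 4 → ℝ) : Fin 4 → ℝ :=
  ![(x 1 ^ 2 + a ^ 2) / (Real.sqrt (rhoSq a (x 1) (x 2)) * Real.sqrt (Delta m a q (x 1))), 0, 0,
    a / (Real.sqrt (rhoSq a (x 1) (x 2)) * Real.sqrt (Delta m a q (x 1)))]

/-- The vector field E₁. -/
def E1 (a : ℝ) (x : Fin 4 → ℝ) : Fin 4 → ℝ :=
  ![a * Real.sin (x 2) ^ 2 / (Real.sqrt (rhoSq a (x 1) (x 2)) * Real.sin (x 2)), 0, 0,
    1 / (Real.sqrt (rhoSq a (x 1) (x 2)) * Real.sin (x 2))]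

/-- The vector field E₂. -/
def E2 (a : ℝ) (x : Fin 4 → ℝ) : Fin 4 → ℝ :=
  ![0, 0, 1 / Real.sqrt (rhoSq a (x 1) (x 2)), 0]

/-- The vector field E₃. -/
def E3 (m a q : ℝ) (x : Fin 4 → ℝ) : Fin 4 → ℝ :=
  ![0, Real.sqrt (Delta m a q (x 1)) / Real.sqrt (rhoSq a (x 1) (x 2)), 0, 0]

/-- Lie bracket of vector fields on ℝ⁴: [V,W](x) = DW(x)·V(x) − DV(x)·W(x). -/
def lieBracket (V W : (Fin 4 → ℝ) → Fin 4 → ℝ) (x : Fin 4 → ℝ) : Fin 4 → ℝ :=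
  fderiv ℝ W x (V x) - fderiv ℝ V x (W x)

set_option maxHeartbeats 2000000

def Pr (i : Fin 4) : (Fin 4 → ℝ) →L[ℝ] ℝ := ContinuousLinearMap.proj i
@[simp] lemma Pr_apply (i : Fin 4) (v : Fin 4 → ℝ) : Pr i v = v i := rfl

section derivs
variable (m a q S D c s : ℝ) (x : Fin 4 → ℝ)

lemma hasFDerivAt_E2' (hS : S = Real.sqrt (rhoSq a (x 1) (x 2))) (hc : c = Real.cos (x 2))
    (hs : s = Real.sin (x 2)) (hρ : 0 < rhoSq a (x 1) (x 2)) :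
    HasFDerivAt (E2 a) (ContinuousLinearMap.pi
      ![0, 0, (-(x 1) / S ^ 3) • Pr 1 + (a ^ 2 * c * s / S ^ 3) • Pr 2, 0]) x := by
  subst hS hc hs
  have h2 : Real.sqrt (rhoSq a (x 1) (x 2)) ^ 2 = rhoSq a (x 1) (x 2) := Real.sq_sqrt hρ.le
  have h3 : Real.sqrt (rhoSq a (x 1) (x 2)) ^ 3
      = rhoSq a (x 1) (x 2) * Real.sqrt (rhoSq a (x 1) (x 2)) := by rw [pow_succ, h2]
  have hS0 : (0:ℝ) < Real.sqrt (rhoSq a (x 1) (x 2)) := Real.sqrt_pos.2 hρ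
  simp only [rhoSq] at hρ h2 h3 hS0 ⊢
  have hx1 : HasFDerivAt (fun y : Fin 4 → ℝ => y 1) (Pr 1) x := hasFDerivAt_apply 1 x
  have hx2 : HasFDerivAt (fun y : Fin 4 → ℝ => y 2) (Pr 2) x := hasFDerivAt_apply 2 x
  have hcos : HasFDerivAt (fun y : Fin 4 → ℝ => Real.cos (y 2)) ((-Real.sin (x 2)) • Pr 2) x :=
    (Real.hasDerivAt_cos (x 2)).comp_hasFDerivAt (f := fun y : Fin 4 → ℝ => y 2) x hx2
  have hρf := ((hasDerivAt_pow 2 (x 1)).comp_hasFDerivAt x hx1).add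
      (((hasDerivAt_pow 2 (Real.cos (x 2))).comp_hasFDerivAt x hcos).const_mul (a ^ 2))
  have hSf := (Real.hasDerivAt_sqrt hρ.ne').comp_hasFDerivAt x hρf
  have hSinv := (hasDerivAt_inv hS0.ne').comp_hasFDerivAt x hSf
  refine hasFDerivAt_pi'' fun i => ?_
  fin_cases i <;>
    simp only [E2, rhoSq, ContinuousLinearMap.proj_pi, Matrix.cons_val_zero, Matrix.cons_val_one,
      Matrix.head_cons, Matrix.cons_val_two, Matrix.tail_cons, Matrix.cons_val_three,
      Fin.isValue, Fin.mk_one, Fin.zero_eta]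
  · exact hasFDerivAt_const 0 x
  · exact hasFDerivAt_const 0 x
  · simp only [one_div]
    refine HasFDerivAt.congr_fderiv (hSinv) ?_
    refine ContinuousLinearMap.ext fun v => ?_
    simp only [ContinuousLinearMap.add_apply, ContinuousLinearMap.smul_apply, Pr_apply,
      smul_eq_mul, ContinuousLinearMap.neg_apply, Pi.add_apply, Pi.sub_apply, Fin.reduceFinMk,
      Matrix.cons_val, Function.comp_apply]
    generalize hu : Real.sqrt (x 1 ^ 2 + a ^ 2 * Real.cos (x 2) ^ 2) = u at hS0 ⊢
    first
      | (generalize hw : Real.sqrt (x 1 ^ 2 - 2 * m * x 1 + a ^ 2 + q ^ 2) = w at hD0 ⊢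
         field_simp
         ring)
      | (field_simp
         ring)
  · exact hasFDerivAt_const 0 x

lemma hasFDerivAt_E3' (hS : S = Real.sqrt (rhoSq a (x 1) (x 2)))
    (hD : D = Real.sqrt (Delta m a q (x 1))) (hc : c = Real.cos (x 2))
    (hs : s = Real.sin (x 2)) (hρ : 0 < rhoSq a (x 1) (x 2)) (hΔ : 0 < Delta m a q (x 1)) :
    HasFDerivAt (E3 m a q) (ContinuousLinearMap.pi
      ![0, ((x 1 - m) / (D * S) - D * x 1 / S ^ 3) • Pr 1 + (D * (a ^ 2 * c * s) / S ^ 3) • Pr 2,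
        0, 0]) x := by
  subst hS hD hc hs
  have h2 : Real.sqrt (rhoSq a (x 1) (x 2)) ^ 2 = rhoSq a (x 1) (x 2) := Real.sq_sqrt hρ.le
  have h3 : Real.sqrt (rhoSq a (x 1) (x 2)) ^ 3
      = rhoSq a (x 1) (x 2) * Real.sqrt (rhoSq a (x 1) (x 2)) := by rw [pow_succ, h2]
  have hS0 : (0:ℝ) < Real.sqrt (rhoSq a (x 1) (x 2)) := Real.sqrt_pos.2 hρ
  have hd2 : Real.sqrt (Delta m a q (x 1)) ^ 2 = Delta m a q (x 1) := Real.sq_sqrt hΔ.le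
  have hD0 : (0:ℝ) < Real.sqrt (Delta m a q (x 1)) := Real.sqrt_pos.2 hΔ
  simp only [rhoSq, Delta] at hρ h2 h3 hS0 hΔ hd2 hD0 ⊢
  have hx1 : HasFDerivAt (fun y : Fin 4 → ℝ => y 1) (Pr 1) x := hasFDerivAt_apply 1 x
  have hx2 : HasFDerivAt (fun y : Fin 4 → ℝ => y 2) (Pr 2) x := hasFDerivAt_apply 2 x
  have hcos : HasFDerivAt (fun y : Fin 4 → ℝ => Real.cos (y 2)) ((-Real.sin (x 2)) • Pr 2) x :=
    (Real.hasDerivAt_cos (x 2)).comp_hasFDerivAt (f := fun y : Fin 4 → ℝ => y 2) x hx2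
  have hρf := ((hasDerivAt_pow 2 (x 1)).comp_hasFDerivAt x hx1).add
      (((hasDerivAt_pow 2 (Real.cos (x 2))).comp_hasFDerivAt x hcos).const_mul (a ^ 2))
  have hSf := (Real.hasDerivAt_sqrt hρ.ne').comp_hasFDerivAt x hρf
  have hSinv := (hasDerivAt_inv hS0.ne').comp_hasFDerivAt x hSf
  have hΔf := ((((hasDerivAt_pow 2 (x 1)).comp_hasFDerivAt x hx1).sub
      (hx1.const_mul (2 * m))).add_const (a ^ 2)).add_const (q ^ 2)
  have hDf := (Real.hasDerivAt_sqrt hΔ.ne').comp_hasFDerivAt x hΔf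
  refine hasFDerivAt_pi'' fun i => ?_
  fin_cases i <;>
    simp only [E3, rhoSq, Delta, ContinuousLinearMap.proj_pi, Matrix.cons_val_zero,
      Matrix.cons_val_one, Matrix.head_cons, Matrix.cons_val_two, Matrix.tail_cons,
      Matrix.cons_val_three, Fin.isValue, Fin.mk_one, Fin.zero_eta]
  · exact hasFDerivAt_const 0 x
  · simp only [div_eq_mul_inv]
    refine HasFDerivAt.congr_fderiv (hDf.mul hSinv) ?_
    refine ContinuousLinearMap.ext fun v => ?_
    simp only [ContinuousLinearMap.add_apply, ContinuousLinearMap.smul_apply, Pr_apply,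
      smul_eq_mul, ContinuousLinearMap.neg_apply, Pi.add_apply, Pi.sub_apply, Fin.reduceFinMk,
      Matrix.cons_val, ContinuousLinearMap.sub_apply,
      Function.comp_apply]
    generalize hu : Real.sqrt (x 1 ^ 2 + a ^ 2 * Real.cos (x 2) ^ 2) = u at hS0 ⊢
    first
      | (generalize hw : Real.sqrt (x 1 ^ 2 - 2 * m * x 1 + a ^ 2 + q ^ 2) = w at hD0 ⊢
         field_simp
         ring)
      | (field_simp
         ring)
  · exact hasFDerivAt_const 0 x
  · exact hasFDerivAt_const 0 x

lemma hasFDerivAt_E0' (hS : S = Real.sqrt (rhoSq a (x 1) (x 2)))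
    (hD : D = Real.sqrt (Delta m a q (x 1))) (hc : c = Real.cos (x 2))
    (hs : s = Real.sin (x 2)) (hρ : 0 < rhoSq a (x 1) (x 2)) (hΔ : 0 < Delta m a q (x 1)) :
    HasFDerivAt (E0 m a q) (ContinuousLinearMap.pi
      ![(2 * x 1 / (S * D)
          - (x 1 ^ 2 + a ^ 2) * (x 1 * D ^ 2 + S ^ 2 * (x 1 - m)) / (S ^ 3 * D ^ 3)) • Pr 1
          + ((x 1 ^ 2 + a ^ 2) * a ^ 2 * c * s / (S ^ 3 * D)) • Pr 2,
        0, 0,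
        (-(a * (x 1 * D ^ 2 + S ^ 2 * (x 1 - m))) / (S ^ 3 * D ^ 3)) • Pr 1
          + (a ^ 3 * c * s / (S ^ 3 * D)) • Pr 2]) x := by
  subst hS hD hc hs
  have h2 : Real.sqrt (rhoSq a (x 1) (x 2)) ^ 2 = rhoSq a (x 1) (x 2) := Real.sq_sqrt hρ.le
  have h3 : Real.sqrt (rhoSq a (x 1) (x 2)) ^ 3
      = rhoSq a (x 1) (x 2) * Real.sqrt (rhoSq a (x 1) (x 2)) := by rw [pow_succ, h2]
  have hS0 : (0:ℝ) < Real.sqrt (rhoSq a (x 1) (x 2)) := Real.sqrt_pos.2 hρ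
  have hd2 : Real.sqrt (Delta m a q (x 1)) ^ 2 = Delta m a q (x 1) := Real.sq_sqrt hΔ.le
  have hd3 : Real.sqrt (Delta m a q (x 1)) ^ 3
      = Delta m a q (x 1) * Real.sqrt (Delta m a q (x 1)) := by rw [pow_succ, hd2]
  have hD0 : (0:ℝ) < Real.sqrt (Delta m a q (x 1)) := Real.sqrt_pos.2 hΔ
  simp only [rhoSq, Delta] at hρ h2 h3 hS0 hΔ hd2 hd3 hD0 ⊢
  have hx1 : HasFDerivAt (fun y : Fin 4 → ℝ => y 1) (Pr 1) x := hasFDerivAt_apply 1 x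
  have hx2 : HasFDerivAt (fun y : Fin 4 → ℝ => y 2) (Pr 2) x := hasFDerivAt_apply 2 x
  have hcos : HasFDerivAt (fun y : Fin 4 → ℝ => Real.cos (y 2)) ((-Real.sin (x 2)) • Pr 2) x :=
    (Real.hasDerivAt_cos (x 2)).comp_hasFDerivAt (f := fun y : Fin 4 → ℝ => y 2) x hx2
  have hρf := ((hasDerivAt_pow 2 (x 1)).comp_hasFDerivAt x hx1).add
      (((hasDerivAt_pow 2 (Real.cos (x 2))).comp_hasFDerivAt x hcos).const_mul (a ^ 2))
  have hSf := (Real.hasDerivAt_sqrt hρ.ne').comp_hasFDerivAt x hρf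
  have hΔf := ((((hasDerivAt_pow 2 (x 1)).comp_hasFDerivAt x hx1).sub
      (hx1.const_mul (2 * m))).add_const (a ^ 2)).add_const (q ^ 2)
  have hDf := (Real.hasDerivAt_sqrt hΔ.ne').comp_hasFDerivAt x hΔf
  have hSD := hSf.mul hDf
  have hSDinv := (hasDerivAt_inv (mul_ne_zero hS0.ne' hD0.ne')).comp_hasFDerivAt x hSD
  have hnum := ((hasDerivAt_pow 2 (x 1)).comp_hasFDerivAt x hx1).add_const (a ^ 2)
  refine hasFDerivAt_pi'' fun i => ?_
  fin_cases i <;>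
    simp only [E0, rhoSq, Delta, ContinuousLinearMap.proj_pi, Matrix.cons_val_zero,
      Matrix.cons_val_one, Matrix.head_cons, Matrix.cons_val_two, Matrix.tail_cons,
      Matrix.cons_val_three, Fin.isValue, Fin.mk_one, Fin.zero_eta]
  · simp only [div_eq_mul_inv]
    refine HasFDerivAt.congr_fderiv (hnum.mul hSDinv) ?_
    refine ContinuousLinearMap.ext fun v => ?_
    simp only [ContinuousLinearMap.add_apply, ContinuousLinearMap.smul_apply, Pr_apply,
      smul_eq_mul, ContinuousLinearMap.neg_apply, Pi.add_apply, Pi.sub_apply, Fin.reduceFinMk,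
      Matrix.cons_val, ContinuousLinearMap.sub_apply,
      Function.comp_apply]
    generalize hu : Real.sqrt (x 1 ^ 2 + a ^ 2 * Real.cos (x 2) ^ 2) = u at hS0 ⊢
    first
      | (generalize hw : Real.sqrt (x 1 ^ 2 - 2 * m * x 1 + a ^ 2 + q ^ 2) = w at hD0 ⊢
         field_simp
         ring)
      | (field_simp
         ring)
  · exact hasFDerivAt_const 0 x
  · exact hasFDerivAt_const 0 x
  · simp only [div_eq_mul_inv]
    refine HasFDerivAt.congr_fderiv (hSDinv.const_mul a) ?_
    refine ContinuousLinearMap.ext fun v => ?_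
    simp only [ContinuousLinearMap.add_apply, ContinuousLinearMap.smul_apply, Pr_apply,
      smul_eq_mul, ContinuousLinearMap.neg_apply, Pi.add_apply, Pi.sub_apply, Fin.reduceFinMk,
      Matrix.cons_val, ContinuousLinearMap.sub_apply,
      Function.comp_apply]
    generalize hu : Real.sqrt (x 1 ^ 2 + a ^ 2 * Real.cos (x 2) ^ 2) = u at hS0 ⊢
    first
      | (generalize hw : Real.sqrt (x 1 ^ 2 - 2 * m * x 1 + a ^ 2 + q ^ 2) = w at hD0 ⊢
         field_simp
         ring)
      | (field_simp
         ring)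

lemma hasFDerivAt_E1' (hS : S = Real.sqrt (rhoSq a (x 1) (x 2))) (hc : c = Real.cos (x 2))
    (hs : s = Real.sin (x 2)) (hρ : 0 < rhoSq a (x 1) (x 2)) (hsin : 0 < Real.sin (x 2)) :
    HasFDerivAt (E1 a) (ContinuousLinearMap.pi
      ![(-(a * x 1 * s) / S ^ 3) • Pr 1 + (a * c / S + a ^ 3 * c * s ^ 2 / S ^ 3) • Pr 2,
        0, 0,
        (-(x 1) / (S ^ 3 * s)) • Pr 1 + (a ^ 2 * c / S ^ 3 - c / (S * s ^ 2)) • Pr 2]) x := by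
  subst hS hc hs
  have h2 : Real.sqrt (rhoSq a (x 1) (x 2)) ^ 2 = rhoSq a (x 1) (x 2) := Real.sq_sqrt hρ.le
  have h3 : Real.sqrt (rhoSq a (x 1) (x 2)) ^ 3
      = rhoSq a (x 1) (x 2) * Real.sqrt (rhoSq a (x 1) (x 2)) := by rw [pow_succ, h2]
  have hS0 : (0:ℝ) < Real.sqrt (rhoSq a (x 1) (x 2)) := Real.sqrt_pos.2 hρ
  simp only [rhoSq] at hρ h2 h3 hS0 ⊢
  have hx1 : HasFDerivAt (fun y : Fin 4 → ℝ => y 1) (Pr 1) x := hasFDerivAt_apply 1 x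
  have hx2 : HasFDerivAt (fun y : Fin 4 → ℝ => y 2) (Pr 2) x := hasFDerivAt_apply 2 x
  have hcos : HasFDerivAt (fun y : Fin 4 → ℝ => Real.cos (y 2)) ((-Real.sin (x 2)) • Pr 2) x :=
    (Real.hasDerivAt_cos (x 2)).comp_hasFDerivAt (f := fun y : Fin 4 → ℝ => y 2) x hx2
  have hsinf : HasFDerivAt (fun y : Fin 4 → ℝ => Real.sin (y 2)) ((Real.cos (x 2)) • Pr 2) x :=
    (Real.hasDerivAt_sin (x 2)).comp_hasFDerivAt (f := fun y : Fin 4 → ℝ => y 2) x hx2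
  have hρf := ((hasDerivAt_pow 2 (x 1)).comp_hasFDerivAt x hx1).add
      (((hasDerivAt_pow 2 (Real.cos (x 2))).comp_hasFDerivAt x hcos).const_mul (a ^ 2))
  have hSf := (Real.hasDerivAt_sqrt hρ.ne').comp_hasFDerivAt x hρf
  have hSs := hSf.mul hsinf
  have hSsinv := (hasDerivAt_inv (mul_ne_zero hS0.ne' hsin.ne')).comp_hasFDerivAt x hSs
  have hnum := ((hasDerivAt_pow 2 (Real.sin (x 2))).comp_hasFDerivAt x hsinf).const_mul a
  refine hasFDerivAt_pi'' fun i => ?_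
  fin_cases i <;>
    simp only [E1, rhoSq, ContinuousLinearMap.proj_pi, Matrix.cons_val_zero,
      Matrix.cons_val_one, Matrix.head_cons, Matrix.cons_val_two, Matrix.tail_cons,
      Matrix.cons_val_three, Fin.isValue, Fin.mk_one, Fin.zero_eta]
  · simp only [div_eq_mul_inv]
    refine HasFDerivAt.congr_fderiv (hnum.mul hSsinv) ?_
    refine ContinuousLinearMap.ext fun v => ?_
    simp only [ContinuousLinearMap.add_apply, ContinuousLinearMap.smul_apply, Pr_apply,
      smul_eq_mul, ContinuousLinearMap.neg_apply, Pi.add_apply, Pi.sub_apply, Fin.reduceFinMk,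
      Matrix.cons_val, ContinuousLinearMap.sub_apply,
      Function.comp_apply]
    generalize hu : Real.sqrt (x 1 ^ 2 + a ^ 2 * Real.cos (x 2) ^ 2) = u at hS0 ⊢
    first
      | (generalize hw : Real.sqrt (x 1 ^ 2 - 2 * m * x 1 + a ^ 2 + q ^ 2) = w at hD0 ⊢
         field_simp
         ring)
      | (field_simp
         ring)
  · exact hasFDerivAt_const 0 x
  · exact hasFDerivAt_const 0 x
  · simp only [one_div]
    refine HasFDerivAt.congr_fderiv (hSsinv) ?_
    refine ContinuousLinearMap.ext fun v => ?_
    simp only [ContinuousLinearMap.add_apply, ContinuousLinearMap.smul_apply, Pr_apply,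
      smul_eq_mul, ContinuousLinearMap.neg_apply, Pi.add_apply, Pi.sub_apply, Fin.reduceFinMk,
      Matrix.cons_val, ContinuousLinearMap.sub_apply,
      Function.comp_apply]
    generalize hu : Real.sqrt (x 1 ^ 2 + a ^ 2 * Real.cos (x 2) ^ 2) = u at hS0 ⊢
    first
      | (generalize hw : Real.sqrt (x 1 ^ 2 - 2 * m * x 1 + a ^ 2 + q ^ 2) = w at hD0 ⊢
         field_simp
         ring)
      | (field_simp
         ring)

end derivs

theorem frame_lie_brackets (m a q : ℝ) (hm : 0 < m) (ha : 0 ≤ a)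
    (hmaq : a ^ 2 + q ^ 2 ≤ m ^ 2) (x : Fin 4 → ℝ)
    (hr : rPlus m a q < x 1) (hθ0 : 0 < x 2) (hθπ : x 2 < π) :
    (lieBracket (E0 m a q) (E1 a) x = 0) ∧
    (lieBracket (E0 m a q) (E2 a) x =
      (-(a ^ 2 * Real.cos (x 2) * Real.sin (x 2) / Real.sqrt (rhoSq a (x 1) (x 2)) ^ 3)) •
        E0 m a q x) ∧
    (lieBracket (E0 m a q) (E3 m a q) x =
      ((x 1 - m) / (Real.sqrt (rhoSq a (x 1) (x 2)) * Real.sqrt (Delta m a q (x 1)))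
        - x 1 * Real.sqrt (Delta m a q (x 1)) / Real.sqrt (rhoSq a (x 1) (x 2)) ^ 3) •
        E0 m a q x
      + (2 * a * x 1 * Real.sin (x 2) / Real.sqrt (rhoSq a (x 1) (x 2)) ^ 3) • E1 a x) ∧
    (lieBracket (E1 a) (E2 a) x =
      ((rhoSq a (x 1) (x 2) + a ^ 2 * Real.sin (x 2) ^ 2) * Real.cos (x 2)
        / (Real.sqrt (rhoSq a (x 1) (x 2)) ^ 3 * Real.sin (x 2))) • E1 a x
      - (2 * a * Real.sqrt (Delta m a q (x 1)) * Real.cos (x 2)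
        / Real.sqrt (rhoSq a (x 1) (x 2)) ^ 3) • E0 m a q x) ∧
    (lieBracket (E1 a) (E3 m a q) x =
      (x 1 * Real.sqrt (Delta m a q (x 1)) / Real.sqrt (rhoSq a (x 1) (x 2)) ^ 3) • E1 a x) ∧
    (lieBracket (E2 a) (E3 m a q) x =
      (x 1 * Real.sqrt (Delta m a q (x 1)) / Real.sqrt (rhoSq a (x 1) (x 2)) ^ 3) • E2 a x
      + (a ^ 2 * Real.cos (x 2) * Real.sin (x 2) / Real.sqrt (rhoSq a (x 1) (x 2)) ^ 3) •
        E3 m a q x) := by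
  have hsqnn : (0:ℝ) ≤ m ^ 2 - a ^ 2 - q ^ 2 := by nlinarith
  have hrm : m < x 1 := by
    have h := Real.sqrt_nonneg (m ^ 2 - a ^ 2 - q ^ 2)
    simp only [rPlus] at hr; linarith
  have hr0 : 0 < x 1 := hm.trans hrm
  have hΔ : 0 < Delta m a q (x 1) := by
    have h := Real.sq_sqrt hsqnn
    have h2 := Real.sqrt_nonneg (m ^ 2 - a ^ 2 - q ^ 2)
    simp only [rPlus] at hr
    simp only [Delta]
    nlinarith
  have hρ : 0 < rhoSq a (x 1) (x 2) := by
    simp only [rhoSq]; nlinarith [sq_nonneg (a * Real.cos (x 2))]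
  have hsin : 0 < Real.sin (x 2) := Real.sin_pos_of_pos_of_lt_pi hθ0 hθπ
  have hS0 : (0:ℝ) < Real.sqrt (rhoSq a (x 1) (x 2)) := Real.sqrt_pos.2 hρ
  have hD0 : (0:ℝ) < Real.sqrt (Delta m a q (x 1)) := Real.sqrt_pos.2 hΔ
  have hu2 : Real.sqrt (rhoSq a (x 1) (x 2)) ^ 2 = rhoSq a (x 1) (x 2) := Real.sq_sqrt hρ.le
  have hw2 : Real.sqrt (Delta m a q (x 1)) ^ 2 = Delta m a q (x 1) := Real.sq_sqrt hΔ.le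
  have hpyth : Real.sin (x 2) ^ 2 + Real.cos (x 2) ^ 2 = 1 := Real.sin_sq_add_cos_sq (x 2)
  have hE0 := hasFDerivAt_E0' m a q _ _ _ _ x rfl rfl rfl rfl hρ hΔ
  have hE1 := hasFDerivAt_E1' a _ _ _ x rfl rfl rfl hρ hsin
  have hE2 := hasFDerivAt_E2' a _ _ _ x rfl rfl rfl hρ
  have hE3 := hasFDerivAt_E3' m a q _ _ _ _ x rfl rfl rfl rfl hρ hΔ
  have hu2' : Real.sqrt (x 1 ^ 2 + a ^ 2 * Real.cos (x 2) ^ 2) ^ 2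
      = x 1 ^ 2 + a ^ 2 * Real.cos (x 2) ^ 2 := by
    have h := hu2; simp only [rhoSq] at h; exact h
  have hw2' : Real.sqrt (x 1 ^ 2 - 2 * m * x 1 + a ^ 2 + q ^ 2) ^ 2
      = x 1 ^ 2 - 2 * m * x 1 + a ^ 2 + q ^ 2 := by
    have h := hw2; simp only [Delta] at h; exact h
  have hS0' : (0:ℝ) < Real.sqrt (x 1 ^ 2 + a ^ 2 * Real.cos (x 2) ^ 2) := by
    have h := hS0; simp only [rhoSq] at h; exact h
  have hD0' : (0:ℝ) < Real.sqrt (x 1 ^ 2 - 2 * m * x 1 + a ^ 2 + q ^ 2) := by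
    have h := hD0; simp only [Delta] at h; exact h
  refine ⟨?_, ?_, ?_, ?_, ?_, ?_⟩
  · simp only [lieBracket, hE0.fderiv, hE1.fderiv]
    funext i
    fin_cases i <;>
      simp [E0, E1, ContinuousLinearMap.pi_apply, Matrix.cons_val_zero, Matrix.cons_val_one,
        Matrix.head_cons, Matrix.cons_val_two, Matrix.tail_cons, Matrix.cons_val_three,
        Pi.sub_apply, ContinuousLinearMap.add_apply, ContinuousLinearMap.smul_apply, Pr_apply,
        smul_eq_mul, rhoSq, Delta]
  · simp only [lieBracket, hE0.fderiv, hE2.fderiv]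
    funext i
    fin_cases i <;>
      simp [E0, E2, ContinuousLinearMap.pi_apply, Matrix.cons_val_zero, Matrix.cons_val_one,
        Matrix.head_cons, Matrix.cons_val_two, Matrix.tail_cons, Matrix.cons_val_three,
        Pi.sub_apply, Pi.smul_apply, ContinuousLinearMap.add_apply, ContinuousLinearMap.smul_apply,
        Pr_apply, smul_eq_mul, rhoSq, Delta]
    all_goals (
      generalize hu : Real.sqrt (x 1 ^ 2 + a ^ 2 * Real.cos (x 2) ^ 2) = u at hS0' hu2' ⊢
      try generalize hw : Real.sqrt (x 1 ^ 2 - 2 * m * x 1 + a ^ 2 + q ^ 2) = w at hD0' hw2' ⊢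
      field_simp
      try ring)
  · simp only [lieBracket, hE0.fderiv, hE3.fderiv]
    funext i
    fin_cases i <;>
      simp [E0, E1, E3, ContinuousLinearMap.pi_apply, Matrix.cons_val_zero, Matrix.cons_val_one,
        Matrix.head_cons, Matrix.cons_val_two, Matrix.tail_cons, Matrix.cons_val_three,
        Pi.sub_apply, Pi.add_apply, Pi.smul_apply, ContinuousLinearMap.add_apply,
        ContinuousLinearMap.smul_apply, Pr_apply, smul_eq_mul, rhoSq, Delta]
    all_goals (
      generalize hu : Real.sqrt (x 1 ^ 2 + a ^ 2 * Real.cos (x 2) ^ 2) = u at hS0' hu2' ⊢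
      try generalize hw : Real.sqrt (x 1 ^ 2 - 2 * m * x 1 + a ^ 2 + q ^ 2) = w at hD0' hw2' ⊢
      field_simp)
    any_goals ring
    linear_combination (-(2 * x 1 * w ^ 2)) * hu2'
      + (-(2 * x 1 * w ^ 2) * a ^ 2) * hpyth
  · simp only [lieBracket, hE1.fderiv, hE2.fderiv]
    funext i
    fin_cases i <;>
      simp [E0, E1, E2, ContinuousLinearMap.pi_apply, Matrix.cons_val_zero, Matrix.cons_val_one,
        Matrix.head_cons, Matrix.cons_val_two, Matrix.tail_cons, Matrix.cons_val_three,
        Pi.sub_apply, Pi.add_apply, Pi.smul_apply, ContinuousLinearMap.add_apply,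
        ContinuousLinearMap.smul_apply, Pr_apply, smul_eq_mul, rhoSq, Delta]
    all_goals (
      generalize hu : Real.sqrt (x 1 ^ 2 + a ^ 2 * Real.cos (x 2) ^ 2) = u at hS0' hu2' ⊢
      try generalize hw : Real.sqrt (x 1 ^ 2 - 2 * m * x 1 + a ^ 2 + q ^ 2) = w at hD0' hw2' ⊢
      field_simp)
    any_goals ring
    linear_combination (-(a * Real.cos (x 2))) * hu2'
      + (-(2 * a ^ 3 * Real.cos (x 2))) * hpyth
    linear_combination (Real.cos (x 2)) * hu2'
  · simp only [lieBracket, hE1.fderiv, hE3.fderiv]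
    funext i
    fin_cases i <;>
      simp [E1, E3, ContinuousLinearMap.pi_apply, Matrix.cons_val_zero, Matrix.cons_val_one,
        Matrix.head_cons, Matrix.cons_val_two, Matrix.tail_cons, Matrix.cons_val_three,
        Pi.sub_apply, Pi.add_apply, Pi.smul_apply, ContinuousLinearMap.add_apply,
        ContinuousLinearMap.smul_apply, Pr_apply, smul_eq_mul, rhoSq, Delta]
    all_goals (
      generalize hu : Real.sqrt (x 1 ^ 2 + a ^ 2 * Real.cos (x 2) ^ 2) = u at hS0' hu2' ⊢
      try generalize hw : Real.sqrt (x 1 ^ 2 - 2 * m * x 1 + a ^ 2 + q ^ 2) = w at hD0' hw2' ⊢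
      field_simp
      try ring)
  · simp only [lieBracket, hE2.fderiv, hE3.fderiv]
    funext i
    fin_cases i <;>
      simp [E2, E3, ContinuousLinearMap.pi_apply, Matrix.cons_val_zero, Matrix.cons_val_one,
        Matrix.head_cons, Matrix.cons_val_two, Matrix.tail_cons, Matrix.cons_val_three,
        Pi.sub_apply, Pi.add_apply, Pi.smul_apply, ContinuousLinearMap.add_apply,
        ContinuousLinearMap.smul_apply, Pr_apply, smul_eq_mul, rhoSq, Delta]
    all_goals (
      generalize hu : Real.sqrt (x 1 ^ 2 + a ^ 2 * Real.cos (x 2) ^ 2) = u at hS0' hu2' ⊢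
      try generalize hw : Real.sqrt (x 1 ^ 2 - 2 * m * x 1 + a ^ 2 + q ^ 2) = w at hD0' hw2' ⊢
      field_simp
      try ring)
end
end

section
/- Fix r > r₊, θ ∈ (0, π) and a sign ε ∈ {+1, −1}. Define, for v ∈ [0, 1), the components Z^r_ε(v) = ε(2a√Δ/ρ²)(r sin θ/Δ) + v(2rΔ − ρ²(r−m))/(ρ²Δ) and Z^θ_ε(v) = ε(2a√Δ/ρ²) cos θ + v(ρ² + 2a² sin²θ) cos θ/(ρ² sin θ). Then as v → 1⁻, Z^r_ε(v) tends to (sin θ/(ρ²√Δ))(r² + a² + εa√Δ sin θ)² · ∂Ψ_ε/∂r(r,θ) and Z^θ_ε(v) tends to (sin θ/(ρ²√Δ))(r² + a² + εa√Δ sin θ)² · ∂Ψ_ε/∂θ(r,θ). -/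
noncomputable section

open Real Filter

/-- The potential Ψ_ε(r,θ) = (−1/sin θ − ε a/√Δ) / ((r² + a²)/√Δ + ε a sin θ). -/
def Psi (m a q ε r θ : ℝ) : ℝ :=
  (-1 / Real.sin θ - ε * a / Real.sqrt (Delta m a q r)) /
    ((r ^ 2 + a ^ 2) / Real.sqrt (Delta m a q r) + ε * a * Real.sin θ)

/-- The r-component of Z_ε(v). -/
def Zr (m a q ε r θ v : ℝ) : ℝ :=
  ε * (2 * a * Real.sqrt (Delta m a q r) / rhoSq a r θ) *
      (r * Real.sin θ / Delta m a q r)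
  + v * (2 * r * Delta m a q r - rhoSq a r θ * (r - m)) / (rhoSq a r θ * Delta m a q r)

/-- The θ-component of Z_ε(v). -/
def Zθ (m a q ε r θ v : ℝ) : ℝ :=
  ε * (2 * a * Real.sqrt (Delta m a q r) / rhoSq a r θ) * Real.cos θ
  + v * (rhoSq a r θ + 2 * a ^ 2 * Real.sin θ ^ 2) * Real.cos θ /
      (rhoSq a r θ * Real.sin θ)

lemma auxr_cancel (ρ s t P Y : ℝ) (hρ : ρ ≠ 0) (hs : s ≠ 0) (ht : t ≠ 0) (hP : P ≠ 0) :
    t / (ρ * s) * P ^ 2 * (Y / (s * t * P ^ 2)) = Y / (ρ * s ^ 2) := by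
  field_simp

lemma auxθ_cancel (ρ s t P c B : ℝ) (hρ : ρ ≠ 0) (hs : s ≠ 0) (ht : t ≠ 0) (hP : P ≠ 0) :
    t / (ρ * s) * P ^ 2 * (s * c * B / (t ^ 2 * P ^ 2)) = c * B / (ρ * t) := by
  field_simp

set_option maxHeartbeats 2000000 in
theorem Z_limit_is_dPsi (m a q : ℝ) (hm : 0 < m) (ha : 0 ≤ a)
    (hmaq : a ^ 2 + q ^ 2 ≤ m ^ 2) (ε : ℝ) (hε : ε = 1 ∨ ε = -1)
    (r θ : ℝ) (hr : rPlus m a q < r) (hθ0 : 0 < θ) (hθπ : θ < π) :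
    Tendsto (fun v => Zr m a q ε r θ v) (nhdsWithin 1 (Set.Iio 1))
      (nhds ((Real.sin θ / (rhoSq a r θ * Real.sqrt (Delta m a q r))) *
        (r ^ 2 + a ^ 2 + ε * a * Real.sqrt (Delta m a q r) * Real.sin θ) ^ 2 *
        deriv (fun r' => Psi m a q ε r' θ) r)) ∧
    Tendsto (fun v => Zθ m a q ε r θ v) (nhdsWithin 1 (Set.Iio 1))
      (nhds ((Real.sin θ / (rhoSq a r θ * Real.sqrt (Delta m a q r))) *
        (r ^ 2 + a ^ 2 + ε * a * Real.sqrt (Delta m a q r) * Real.sin θ) ^ 2 *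
        deriv (fun θ' => Psi m a q ε r θ') θ)) := by

  have hstpos : 0 < Real.sin θ := Real.sin_pos_of_pos_of_lt_pi hθ0 hθπ
  have hwnn : 0 ≤ Real.sqrt (m^2 - a^2 - q^2) := Real.sqrt_nonneg _
  have hr' := hr
  unfold rPlus at hr'
  have hrm : m < r := by linarith
  have hr0 : 0 < r := hm.trans hrm
  have hΔ : 0 < Delta m a q r := by
    have hw : Real.sqrt (m^2-a^2-q^2) ^ 2 = m^2-a^2-q^2 := Real.sq_sqrt (by linarith)
    unfold Delta
    nlinarith [hw, hwnn, hr', sq_nonneg (r - m - Real.sqrt (m^2-a^2-q^2))]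
  set s := Real.sqrt (Delta m a q r) with hsdef
  have hs0 : 0 < s := Real.sqrt_pos.mpr hΔ
  have hs : s ^ 2 = Delta m a q r := Real.sq_sqrt hΔ.le
  have hρpos : 0 < rhoSq a r θ := by
    unfold rhoSq; nlinarith [sq_nonneg (a * Real.cos θ), mul_pos hr0 hr0, sq_abs (a * Real.cos θ), mul_self_nonneg (a * Real.cos θ)]
  have hΔlt : Delta m a q r < r^2 + a^2 := by unfold Delta; nlinarith
  have hsq2 : (a*s)^2 < (r^2+a^2)^2 := by nlinarith [hs, hΔlt, sq_nonneg a, mul_pos hr0 hr0, sq_nonneg s]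
  have has : a * s < r^2 + a^2 := by nlinarith [mul_nonneg ha hs0.le, mul_pos hr0 hr0]
  have hX : 0 ≤ a*s*Real.sin θ := by positivity
  have hX2 : a*s*Real.sin θ ≤ a*s := by
    nlinarith [Real.sin_le_one θ, mul_nonneg ha hs0.le]
  have hεX : -(a*s) ≤ ε*(a*s*Real.sin θ) := by
    rcases hε with h | h <;> rw [h] <;> linarith
  have hP : 0 < r^2 + a^2 + ε*a*s*Real.sin θ := by nlinarith [hεX, has]
  have hDeq : (r^2+a^2)/s + ε*a*Real.sin θ = (r^2+a^2 + ε*a*s*Real.sin θ)/s := by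
    rw [div_add' _ _ _ hs0.ne']; ring_nf
  have hDne : (r^2+a^2)/s + ε*a*Real.sin θ ≠ 0 := by
    rw [hDeq]; exact (div_pos hP hs0).ne'
  -- derivative in r
  have hΔ' : HasDerivAt (fun r' => Delta m a q r') (2*r - 2*m) r := by
    unfold Delta
    have h0 := (((hasDerivAt_pow 2 r).sub ((hasDerivAt_id r).const_mul (2*m))).add_const (a^2)).add_const (q^2)
    exact h0.congr_deriv (by norm_num)
  have hsq : HasDerivAt (fun r' => Real.sqrt (Delta m a q r')) ((r-m)/s) r := by
    have h1 := (Real.hasDerivAt_sqrt hΔ.ne').comp r hΔ'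
    exact h1.congr_deriv (by rw [← hsdef]; field_simp)
  have hNr := (hasDerivAt_const r ((-1)/Real.sin θ)).sub ((hasDerivAt_const r (ε*a)).div hsq hs0.ne')
  have hDr := (((hasDerivAt_pow 2 r).add_const (a^2)).div hsq hs0.ne').add_const (ε*a*Real.sin θ)
  have hPsir : HasDerivAt (fun r' => Psi m a q ε r' θ) _ r := hNr.div hDr hDne
  -- derivative in θ
  have hsin : HasDerivAt (fun θ' => Real.sin θ') (Real.cos θ) θ := Real.hasDerivAt_sin θ
  have hNθ := ((hasDerivAt_const θ (-1:ℝ)).div hsin hstpos.ne').sub (hasDerivAt_const θ (ε*a/s))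
  have hDθ := (hasDerivAt_const θ ((r^2+a^2)/s)).add ((hsin.const_mul (ε*a)))
  have hPsiθ : HasDerivAt (fun θ' => Psi m a q ε r θ') _ θ := hNθ.div hDθ hDne

  have hc2 : Real.cos θ ^ 2 = 1 - Real.sin θ ^ 2 := by
    have := Real.sin_sq_add_cos_sq θ; linarith
  have hρ2 : (0:ℝ) < r^2 + a^2*(1 - Real.sin θ^2) := by
    have h := hρpos; unfold rhoSq at h; rw [hc2] at h; exact h
  have hdr : deriv (fun r' => Psi m a q ε r' θ) r
      = ((s + ε*a*Real.sin θ)*(2*r*s + ε*a*Real.sin θ*(r-m))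
          - (r-m)*(r^2+a^2+ε*a*s*Real.sin θ))
        / (s * Real.sin θ * (r^2+a^2+ε*a*s*Real.sin θ)^2) := by
    rw [hPsir.deriv, ← hsdef, hDeq]
    simp only [Pi.div_apply, Pi.sub_apply]
    field_simp [hs0.ne', hstpos.ne', hP.ne']
    ring
  have hdθ : deriv (fun θ' => Psi m a q ε r θ') θ
      = s * Real.cos θ * (r^2 + a^2 + 2*ε*a*s*Real.sin θ + a^2*Real.sin θ^2)
        / (Real.sin θ^2 * (r^2+a^2+ε*a*s*Real.sin θ)^2) := by
    rw [hPsiθ.deriv, ← hsdef, hDeq]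
    simp only [Pi.div_apply, Pi.sub_apply]
    set Pe := r^2+a^2+ε*a*s*Real.sin θ with hPe
    rcases hε with h | h <;> subst h <;>
      field_simp [hs0.ne', hstpos.ne', hP.ne'] <;> ring
  constructor
  · have hcont : Continuous fun v : ℝ => Zr m a q ε r θ v := by
      unfold Zr
      exact continuous_const.add ((continuous_id.mul continuous_const).div_const _)
    have hlim : Tendsto (fun v => Zr m a q ε r θ v) (nhdsWithin 1 (Set.Iio 1))
        (nhds (Zr m a q ε r θ 1)) := (hcont.tendsto 1).mono_left nhdsWithin_le_nhds
    convert hlim using 2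
    rw [hdr, auxr_cancel _ _ _ _ _ hρpos.ne' hs0.ne' hstpos.ne' hP.ne']
    unfold Zr rhoSq
    rw [← hsdef, ← hs, hc2]
    rcases hε with h | h <;> subst h <;>
      field_simp [hs0.ne', hρ2.ne'] <;> ring
  · have hcont : Continuous fun v : ℝ => Zθ m a q ε r θ v := by
      unfold Zθ
      exact continuous_const.add (((continuous_id.mul continuous_const).mul
        continuous_const).div_const _)
    have hlim : Tendsto (fun v => Zθ m a q ε r θ v) (nhdsWithin 1 (Set.Iio 1))
        (nhds (Zθ m a q ε r θ 1)) := (hcont.tendsto 1).mono_left nhdsWithin_le_nhds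
    convert hlim using 2
    rw [hdθ, auxθ_cancel _ _ _ _ _ _ hρpos.ne' hs0.ne' hstpos.ne' hP.ne']
    unfold Zθ rhoSq
    rw [← hsdef, hc2]
    rcases hε with h | h <;> subst h <;>
      field_simp [hs0.ne', hstpos.ne', hρ2.ne'] <;> ring
end
end

section
/- Fix a sign ε ∈ {+1, −1}. For r > r₊ and θ ∈ (0, π), both partial derivatives ∂Ψ_ε/∂r and ∂Ψ_ε/∂θ vanish at (r,θ) if and only if cos θ = 0 and 2rΔ − (r−m)ρ² + 2εar√Δ sin θ = 0. -/
noncomputable section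

open Real

set_option maxHeartbeats 2000000 in
theorem dPsi_vanishes_iff (m a q : ℝ) (hm : 0 < m) (ha : 0 ≤ a)
    (hmaq : a ^ 2 + q ^ 2 ≤ m ^ 2) (ε : ℝ) (hε : ε = 1 ∨ ε = -1)
    (r θ : ℝ) (hr : rPlus m a q < r) (hθ0 : 0 < θ) (hθπ : θ < π) :
    (deriv (fun r' => Psi m a q ε r' θ) r = 0 ∧
     deriv (fun θ' => Psi m a q ε r θ') θ = 0) ↔
      (Real.cos θ = 0 ∧
       2 * r * Delta m a q r - (r - m) * rhoSq a r θ
         + 2 * ε * a * r * Real.sqrt (Delta m a q r) * Real.sin θ = 0) := by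
  have hε2 : ε ^ 2 = 1 := by rcases hε with rfl | rfl <;> norm_num
  have hε1 : -1 ≤ ε ∧ ε ≤ 1 := by rcases hε with rfl | rfl <;> norm_num
  have hsqnn : (0:ℝ) ≤ m ^ 2 - a ^ 2 - q ^ 2 := by nlinarith
  have hrp : m + Real.sqrt (m ^ 2 - a ^ 2 - q ^ 2) < r := hr
  have hsq2 : Real.sqrt (m ^ 2 - a ^ 2 - q ^ 2) ^ 2 = m ^ 2 - a ^ 2 - q ^ 2 :=
    Real.sq_sqrt hsqnn
  have hsqnn' : 0 ≤ Real.sqrt (m ^ 2 - a ^ 2 - q ^ 2) := Real.sqrt_nonneg _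
  have hmr : m < r := by nlinarith
  have hr0 : 0 < r := hm.trans hmr
  have hD : 0 < Delta m a q r := by
    unfold Delta; nlinarith
  set w := Real.sqrt (Delta m a q r) with hw_def
  have hw : 0 < w := Real.sqrt_pos.mpr hD
  have hw2 : w ^ 2 = r ^ 2 - 2 * m * r + a ^ 2 + q ^ 2 := by
    rw [hw_def, Real.sq_sqrt hD.le]; rfl
  have hwr : w < r := by nlinarith
  set s := Real.sin θ with hs_def
  set c := Real.cos θ with hc_def
  have hs : 0 < s := Real.sin_pos_of_pos_of_lt_pi hθ0 hθπ
  have hs1 : s ≤ 1 := Real.sin_le_one θ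
  -- denominator positivity
  have hGnum : 0 < r ^ 2 + a ^ 2 + ε * a * s * w := by
    nlinarith [mul_nonneg ha hw.le, mul_nonneg (mul_nonneg ha hs.le) hw.le,
      sq_nonneg (r - a), mul_nonneg ha hs.le]
  have hGpos : 0 < (r ^ 2 + a ^ 2) / w + ε * a * s := by
    have : (r ^ 2 + a ^ 2) / w + ε * a * s = (r ^ 2 + a ^ 2 + ε * a * s * w) / w := by
      field_simp
    rw [this]; positivity
  have hGne : (r ^ 2 + a ^ 2) / w + ε * a * s ≠ 0 := ne_of_gt hGpos
  -- θ-derivative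
  have hnumθ : HasDerivAt (fun θ' => -1 / Real.sin θ' - ε * a / w) (c / s ^ 2) θ := by
    have h := ((hasDerivAt_const θ (-1:ℝ)).div (Real.hasDerivAt_sin θ) hs.ne').sub_const
      (ε * a / w)
    refine h.congr_deriv ?_
    rw [← hs_def, ← hc_def]; ring
  have hdenθ : HasDerivAt (fun θ' => (r ^ 2 + a ^ 2) / w + ε * a * Real.sin θ')
      (ε * a * c) θ := by
    have h := ((Real.hasDerivAt_sin θ).const_mul (ε * a)).const_add ((r ^ 2 + a ^ 2) / w)
    rw [← hc_def] at h; exact h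
  have hΨθ : HasDerivAt (fun θ' => Psi m a q ε r θ')
      ((c / s ^ 2 * ((r ^ 2 + a ^ 2) / w + ε * a * s) -
        (-1 / s - ε * a / w) * (ε * a * c)) / ((r ^ 2 + a ^ 2) / w + ε * a * s) ^ 2) θ :=
    hnumθ.div hdenθ hGne
  -- r-derivative
  have hpoly : HasDerivAt (fun r' : ℝ => Delta m a q r') (2 * r - 2 * m) r := by
    have h : HasDerivAt (fun r' : ℝ => r' ^ 2 - 2 * m * r' + a ^ 2 + q ^ 2)
        (2 * r - 2 * m) r := by
      have := (((hasDerivAt_pow 2 r).sub ((hasDerivAt_id r).const_mul (2 * m))).add_const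
        (a ^ 2)).add_const (q ^ 2)
      refine this.congr_deriv ?_
      simp
    exact h
  have hsqrtD : HasDerivAt (fun r' => Real.sqrt (Delta m a q r')) ((r - m) / w) r := by
    have h := (Real.hasDerivAt_sqrt hD.ne').comp r hpoly
    have h' : HasDerivAt (fun r' => Real.sqrt (Delta m a q r'))
        (1 / (2 * w) * (2 * r - 2 * m)) r := h
    convert h' using 1
    field_simp
  have hnumr : HasDerivAt (fun r' => -1 / s - ε * a / Real.sqrt (Delta m a q r'))
      (-((0 * w - ε * a * ((r - m) / w)) / w ^ 2)) r := by
    exact ((hasDerivAt_const r (ε * a)).div hsqrtD hw.ne').neg.const_add (-1 / s)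
  have hdenr : HasDerivAt (fun r' => (r' ^ 2 + a ^ 2) / Real.sqrt (Delta m a q r') + ε * a * s)
      ((2 * r * w - (r ^ 2 + a ^ 2) * ((r - m) / w)) / w ^ 2) r := by
    have hnum2 : HasDerivAt (fun r' : ℝ => r' ^ 2 + a ^ 2) (2 * r) r := by
      have := (hasDerivAt_pow 2 r).add_const (a ^ 2)
      refine this.congr_deriv ?_; simp
    exact (hnum2.div hsqrtD hw.ne').add_const (ε * a * s)
  have hΨr : HasDerivAt (fun r' => Psi m a q ε r' θ)
      ((-((0 * w - ε * a * ((r - m) / w)) / w ^ 2) * ((r ^ 2 + a ^ 2) / w + ε * a * s) -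
        (-1 / s - ε * a / w) * ((2 * r * w - (r ^ 2 + a ^ 2) * ((r - m) / w)) / w ^ 2)) /
        ((r ^ 2 + a ^ 2) / w + ε * a * s) ^ 2) r :=
    hnumr.div hdenr hGne
  rw [hΨθ.deriv, hΨr.deriv]
  -- the θ equation is equivalent to cos θ = 0
  have hQpos : 0 < r ^ 2 + a ^ 2 + 2 * ε * a * s * w + a ^ 2 * s ^ 2 := by
    nlinarith [sq_nonneg (ε * a * s + w), sq_nonneg (a * s), mul_nonneg ha hs.le]
  have iffθ : (c / s ^ 2 * ((r ^ 2 + a ^ 2) / w + ε * a * s) -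
      (-1 / s - ε * a / w) * (ε * a * c)) / ((r ^ 2 + a ^ 2) / w + ε * a * s) ^ 2 = 0 ↔
      c = 0 := by
    rw [div_eq_zero_iff]
    have hfac : c / s ^ 2 * ((r ^ 2 + a ^ 2) / w + ε * a * s) -
        (-1 / s - ε * a / w) * (ε * a * c) =
        c * ((r ^ 2 + a ^ 2 + 2 * ε * a * s * w + a ^ 2 * s ^ 2) / (w * s ^ 2)) := by
      field_simp
      linear_combination (c * a ^ 2 * s ^ 2) * hε2
    rw [hfac]
    constructor
    · rintro (h | h)
      · rcases mul_eq_zero.mp h with h' | h'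
        · exact h'
        · exact absurd h' (by positivity)
      · exact absurd h (pow_ne_zero 2 hGne)
    · intro h; left; rw [h, zero_mul]
  -- the r equation
  have iffr : (-((0 * w - ε * a * ((r - m) / w)) / w ^ 2) * ((r ^ 2 + a ^ 2) / w + ε * a * s) -
      (-1 / s - ε * a / w) * ((2 * r * w - (r ^ 2 + a ^ 2) * ((r - m) / w)) / w ^ 2)) /
      ((r ^ 2 + a ^ 2) / w + ε * a * s) ^ 2 = 0 ↔
      2 * r * Delta m a q r - (r - m) * rhoSq a r θ + 2 * ε * a * r * w * s = 0 := by
    have hfac : -((0 * w - ε * a * ((r - m) / w)) / w ^ 2) * ((r ^ 2 + a ^ 2) / w + ε * a * s) -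
        (-1 / s - ε * a / w) * ((2 * r * w - (r ^ 2 + a ^ 2) * ((r - m) / w)) / w ^ 2) =
        (2 * r * Delta m a q r - (r - m) * rhoSq a r θ + 2 * ε * a * r * w * s) /
          (w ^ 3 * s) := by
      have hΔ : Delta m a q r = w ^ 2 := hw2.symm ▸ rfl
      have hρ : rhoSq a r θ = r ^ 2 + a ^ 2 * c ^ 2 := rfl
      have hc2 : c ^ 2 = 1 - s ^ 2 := by
        rw [hc_def, hs_def]; nlinarith [Real.sin_sq_add_cos_sq θ]
      rw [hΔ, hρ, hc2]
      field_simp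
      linear_combination (a ^ 2 * s ^ 2 * (r - m) * w) * hε2
    rw [hfac, div_div, div_eq_zero_iff]
    have hpos : 0 < w ^ 3 * s * ((r ^ 2 + a ^ 2) / w + ε * a * s) ^ 2 :=
      mul_pos (mul_pos (pow_pos hw 3) hs) (pow_pos hGpos 2)
    constructor
    · rintro (h | h)
      · exact h
      · exact absurd h hpos.ne'
    · intro h; left; exact h
  rw [iffθ, iffr, and_comm]
end
end

section
/- Fix m > 0 and q with q² < m². For a ∈ (0, √(m² − q²)) let R₋(a) be the unique r > m + √(m² − a² − q²) satisfying r² − 3mr + 2a² + 2q² − 2a√(r² − 2mr + a² + q²) = 0 (the counter-rotating photon circle radius). Then R₋ is strictly increasing on (0, √(m² − q²)), R₋(a) → 3m/2 + √(9m²/4 − 2q²) as a → 0⁺, and R₋(a) → 2m + 2√(m² − q²) as a → √(m² − q²)⁻. -/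
noncomputable section

open Real Filter

private lemma kn_hasDerivAt (m q x : ℝ) (hx : m * x - q ^ 2 ≠ 0) :
    HasDerivAt (fun r : ℝ => (r ^ 2 - 3 * m * r + 2 * q ^ 2) ^ 2 / (m * r - q ^ 2))
      ((x ^ 2 - 3 * m * x + 2 * q ^ 2) * ((x - m) * (3 * m * x - 4 * q ^ 2)) /
        (m * x - q ^ 2) ^ 2) x := by
  have h1 : HasDerivAt (fun r : ℝ => r ^ 2 - 3 * m * r + 2 * q ^ 2) (2 * x - 3 * m) x := by
    have h := (((hasDerivAt_id x).pow 2).sub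
      ((hasDerivAt_const x (3 * m)).mul (hasDerivAt_id x))).add (hasDerivAt_const x (2 * q ^ 2))
    refine h.congr_deriv ?_
    simp
  have h2 := h1.pow 2
  have h3 : HasDerivAt (fun r : ℝ => m * r - q ^ 2) m x := by
    have h := ((hasDerivAt_const x m).mul (hasDerivAt_id x)).sub (hasDerivAt_const x (q ^ 2))
    refine h.congr_deriv ?_
    simp
  have h4 := h2.div h3 hx
  refine h4.congr_deriv ?_
  simp only [Pi.pow_apply]
  field_simp
  ring

set_option maxHeartbeats 4000000 in
theorem counterrotating_photon_radius_monotone (m q : ℝ) (hm : 0 < m) (hq : q ^ 2 < m ^ 2)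
    (R : ℝ → ℝ)
    (hR : ∀ a ∈ Set.Ioo (0 : ℝ) (Real.sqrt (m ^ 2 - q ^ 2)),
      m + Real.sqrt (m ^ 2 - a ^ 2 - q ^ 2) < R a ∧
      (R a) ^ 2 - 3 * m * R a + 2 * a ^ 2 + 2 * q ^ 2
        - 2 * a * Real.sqrt ((R a) ^ 2 - 2 * m * R a + a ^ 2 + q ^ 2) = 0) :
    StrictMonoOn R (Set.Ioo (0 : ℝ) (Real.sqrt (m ^ 2 - q ^ 2))) ∧
    Tendsto R (nhdsWithin 0 (Set.Ioo (0 : ℝ) (Real.sqrt (m ^ 2 - q ^ 2))))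
      (nhds (3 * m / 2 + Real.sqrt (9 * m ^ 2 / 4 - 2 * q ^ 2))) ∧
    Tendsto R (nhdsWithin (Real.sqrt (m ^ 2 - q ^ 2))
        (Set.Ioo (0 : ℝ) (Real.sqrt (m ^ 2 - q ^ 2))))
      (nhds (2 * m + 2 * Real.sqrt (m ^ 2 - q ^ 2))) := by
  set s : ℝ := Real.sqrt (m ^ 2 - q ^ 2) with hs_def
  set t : ℝ := Real.sqrt (9 * m ^ 2 / 4 - 2 * q ^ 2) with ht_def
  have hs2 : s ^ 2 = m ^ 2 - q ^ 2 := Real.sq_sqrt (by nlinarith)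
  have hs0 : 0 < s := Real.sqrt_pos.2 (by nlinarith)
  have ht2 : t ^ 2 = 9 * m ^ 2 / 4 - 2 * q ^ 2 := Real.sq_sqrt (by nlinarith)
  have ht0 : 0 ≤ t := Real.sqrt_nonneg _
  have htm : m / 2 < t := by nlinarith
  clear_value s t
  set r₀ : ℝ := 3 * m / 2 + t with hr₀_def
  set r₁ : ℝ := 2 * m + 2 * s with hr₁_def
  have hr₀2m : 2 * m < r₀ := by simp only [hr₀_def]; linarith
  have hr01 : r₀ < r₁ := by
    rw [hr₀_def, hr₁_def]
    nlinarith [ht2, hs2, hs0, ht0, mul_pos hm hs0, sq_nonneg (m / 2 + 2 * s - t)]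
  set φ : ℝ → ℝ := fun r => (r ^ 2 - 3 * m * r + 2 * q ^ 2) ^ 2 / (m * r - q ^ 2) with hφ_def
  have hden : ∀ x : ℝ, 2 * m < x → 0 < m * x - q ^ 2 := by intro x hx; nlinarith
  -- A > 0 beyond r₀
  have hApos : ∀ x : ℝ, r₀ < x → 0 < x ^ 2 - 3 * m * x + 2 * q ^ 2 := by
    intro x hx
    have h3 : 0 < x - 3 * m / 2 + t := by simp only [hr₀_def] at hx; linarith
    have h4 : 0 < x - 3 * m / 2 - t := by simp only [hr₀_def] at hx; linarith
    nlinarith [mul_pos h4 h3]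
  -- strict monotonicity of φ on Ici r₀
  have hφmono : StrictMonoOn φ (Set.Ici r₀) := by
    apply strictMonoOn_of_deriv_pos (convex_Ici r₀)
    · apply ContinuousOn.div (by fun_prop) (by fun_prop)
      intro x hx
      exact (hden x (lt_of_lt_of_le hr₀2m hx)).ne'
    · intro x hx
      rw [interior_Ici] at hx
      have hx2 : 2 * m < x := lt_trans hr₀2m hx
      have hdx := hden x hx2
      rw [(kn_hasDerivAt m q x hdx.ne').deriv]
      apply div_pos
      · apply mul_pos (hApos x hx)
        apply mul_pos (by linarith) (by nlinarith)
      · positivity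
  have hφmonoOn := hφmono.monotoneOn
  have hφr₀ : φ r₀ = 0 := by
    have hA : r₀ ^ 2 - 3 * m * r₀ + 2 * q ^ 2 = 0 := by
      simp only [hr₀_def]; linear_combination ht2
    simp only [hφ_def, hA]
    simp
  have hφr₁ : φ r₁ = 4 * s ^ 2 := by
    have hd : m * r₁ - q ^ 2 = (m + s) ^ 2 := by
      simp only [hr₁_def]; linear_combination -hs2
    have hA : r₁ ^ 2 - 3 * m * r₁ + 2 * q ^ 2 = 2 * s * (m + s) := by
      simp only [hr₁_def]; linear_combination 2 * hs2
    have hms : (0:ℝ) < m + s := by linarith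
    simp only [hφ_def, hA, hd]
    field_simp
    ring
  -- key facts about R a
  have hkey : ∀ a ∈ Set.Ioo (0 : ℝ) s, r₀ < R a ∧ R a < r₁ ∧ φ (R a) = 4 * a ^ 2 := by
    rintro a ⟨ha0, has⟩
    obtain ⟨hgt, heq⟩ := hR a ⟨ha0, has⟩
    set r : ℝ := R a with hr_def
    clear_value r
    have ha2 : a ^ 2 < s ^ 2 := by nlinarith
    have hw2 : Real.sqrt (m ^ 2 - a ^ 2 - q ^ 2) ^ 2 = m ^ 2 - a ^ 2 - q ^ 2 :=
      Real.sq_sqrt (by nlinarith)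
    have hw0 : 0 ≤ Real.sqrt (m ^ 2 - a ^ 2 - q ^ 2) := Real.sqrt_nonneg _
    have hrm : m < r := by linarith
    have hdr : 0 < m * r - q ^ 2 := by nlinarith
    have hΔ : 0 < r ^ 2 - 2 * m * r + a ^ 2 + q ^ 2 := by nlinarith
    set d : ℝ := Real.sqrt (r ^ 2 - 2 * m * r + a ^ 2 + q ^ 2) with hd_def
    have hd2 : d ^ 2 = r ^ 2 - 2 * m * r + a ^ 2 + q ^ 2 := Real.sq_sqrt hΔ.le
    have hd0 : 0 ≤ d := Real.sqrt_nonneg _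
    clear_value d
    have h2ad : r ^ 2 - 3 * m * r + 2 * q ^ 2 + 2 * a ^ 2 = 2 * a * d := by linarith
    have hA2 : (r ^ 2 - 3 * m * r + 2 * q ^ 2) ^ 2 = 4 * a ^ 2 * (m * r - q ^ 2) := by
      have h1 : (r ^ 2 - 3 * m * r + 2 * q ^ 2 + 2 * a ^ 2) ^ 2 = 4 * a ^ 2 * d ^ 2 := by
        rw [h2ad]; ring
      nlinarith [h1, hd2]
    have ha2lt : a ^ 2 < m * r - q ^ 2 := by nlinarith
    have hApos' : 0 < r ^ 2 - 3 * m * r + 2 * q ^ 2 := by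
      rcases lt_or_ge 0 (r ^ 2 - 3 * m * r + 2 * q ^ 2) with h | h
      · exact h
      · exfalso
        have hge : -(2 * a ^ 2) ≤ r ^ 2 - 3 * m * r + 2 * q ^ 2 := by
          nlinarith [mul_nonneg ha0.le hd0]
        nlinarith [hA2, ha2lt, mul_pos ha0 ha0]
    have hrr₀ : r₀ < r := by
      by_contra hc
      push_neg at hc
      have h3 : 0 < r - 3 * m / 2 + t := by linarith
      have h4 : r - 3 * m / 2 - t ≤ 0 := by simp only [hr₀_def] at hc; linarith
      have h5 : 0 ≤ -(r - 3 * m / 2 - t) * (r - 3 * m / 2 + t) :=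
        mul_nonneg (neg_nonneg.mpr h4) h3.le
      have h7 : -(r - 3 * m / 2 - t) * (r - 3 * m / 2 + t)
          = (9 * m ^ 2 / 4 - 2 * q ^ 2) - (r ^ 2 - 3 * m * r + 9 * m ^ 2 / 4) := by
        rw [← ht2]; ring
      rw [h7] at h5
      linarith [hApos']
    have hφr : φ r = 4 * a ^ 2 := by
      simp only [hφ_def]
      rw [div_eq_iff hdr.ne']
      linarith [hA2]
    refine ⟨hrr₀, ?_, hφr⟩
    by_contra hc
    push_neg at hc
    have := hφmonoOn (Set.mem_Ici.2 hr01.le) (Set.mem_Ici.2 hrr₀.le) hc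
    rw [hφr₁, hφr] at this
    linarith [ha2]
  clear_value φ r₀ r₁
  refine ⟨?_, ?_, ?_⟩
  · intro a ha b hb hab
    obtain ⟨ha₀, -, hφa⟩ := hkey a ha
    obtain ⟨hb₀, -, hφb⟩ := hkey b hb
    by_contra hc
    push_neg at hc
    have := hφmonoOn (Set.mem_Ici.2 hb₀.le) (Set.mem_Ici.2 ha₀.le) hc
    rw [hφa, hφb] at this
    nlinarith [ha.1, hb.1]
  · rw [Metric.tendsto_nhdsWithin_nhds]
    intro ε hε
    have hφε : 0 < φ (r₀ + ε) := by
      have h := hφmono (Set.mem_Ici.2 (le_refl r₀))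
        (Set.mem_Ici.2 (show r₀ ≤ r₀ + ε by linarith)) (show r₀ < r₀ + ε by linarith)
      rwa [hφr₀] at h
    refine ⟨Real.sqrt (φ (r₀ + ε)) / 2, by positivity, ?_⟩
    intro a ha hd
    obtain ⟨har₀, har₁, hφa⟩ := hkey a ha
    rw [Real.dist_eq] at hd ⊢
    have ha' : a < Real.sqrt (φ (r₀ + ε)) / 2 := by
      rw [abs_lt] at hd; linarith [hd.2]
    have h4a : 4 * a ^ 2 < φ (r₀ + ε) := by
      have h := Real.sq_sqrt hφε.le
      nlinarith [ha.1, Real.sqrt_nonneg (φ (r₀ + ε))]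
    have hlt : R a < r₀ + ε := by
      by_contra hc
      push_neg at hc
      have := hφmonoOn (Set.mem_Ici.2 (by linarith : r₀ ≤ r₀ + ε))
        (Set.mem_Ici.2 har₀.le) hc
      rw [hφa] at this; linarith
    rw [abs_lt]
    constructor <;> linarith
  · rw [Metric.tendsto_nhdsWithin_nhds]
    intro ε hε
    set ρ : ℝ := max (r₁ - ε) r₀ with hρ_def
    have hρ₀ : r₀ ≤ ρ := le_max_right _ _
    have hρ₁ : ρ < r₁ := max_lt (by linarith) hr01
    have hφρlt : φ ρ < 4 * s ^ 2 := by
      have := hφmono (Set.mem_Ici.2 hρ₀) (Set.mem_Ici.2 hr01.le) hρ₁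
      rwa [hφr₁] at this
    have hφρ0 : 0 ≤ φ ρ := by
      have := hφmonoOn (Set.mem_Ici.2 le_rfl) (Set.mem_Ici.2 hρ₀) hρ₀
      rwa [hφr₀] at this
    have hsq : Real.sqrt (φ ρ) < 2 * s := by
      have h := Real.sqrt_lt_sqrt hφρ0 hφρlt
      rwa [show (4 : ℝ) * s ^ 2 = (2 * s) ^ 2 by ring, Real.sqrt_sq (by linarith)] at h
    refine ⟨s - Real.sqrt (φ ρ) / 2, by linarith, ?_⟩
    intro a ha hd
    obtain ⟨har₀, har₁, hφa⟩ := hkey a ha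
    rw [Real.dist_eq] at hd ⊢
    have ha' : Real.sqrt (φ ρ) / 2 < a := by
      rw [abs_lt] at hd; linarith [hd.1]
    have h4a : φ ρ < 4 * a ^ 2 := by
      have h := Real.sq_sqrt hφρ0
      nlinarith [Real.sqrt_nonneg (φ ρ)]
    have hgt' : ρ < R a := by
      by_contra hc
      push_neg at hc
      have := hφmonoOn (Set.mem_Ici.2 har₀.le) (Set.mem_Ici.2 hρ₀) hc
      rw [hφa] at this; linarith
    have : r₁ - ε < R a := lt_of_le_of_lt (le_max_left _ _) hgt'
    rw [abs_lt]
    constructor <;> linarith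
end
end

section
/- For all r > r₊ and θ ∈ (0, π), the potential Ψ₋ (sign ε = −1) satisfies: Ψ₋(r,θ) < 0 if and only if a² sin²θ < Δ (outside the ergosphere), Ψ₋(r,θ) > 0 if and only if Δ < a² sin²θ (inside the ergosphere), and Ψ₋(r,θ) = 0 if and only if Δ = a² sin²θ. -/
noncomputable section

open Real

/-!
Clearing the inner denominators gives
`Ψ₋ = (a sin θ - √Δ) / (sin θ (r² + a² - a sin θ √Δ))`.
Outside the horizon `0 < √Δ < r`, so the denominator is positive, and since `a sin θ + √Δ > 0`
the numerator has the sign of `(a sin θ)² - Δ`.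
-/

section SignLemmas

variable {α : Type*} [Field α] [LinearOrder α] [IsStrictOrderedRing α] {x y : α}

lemma sign_div_of_pos (hy : 0 < y) : SignType.sign (x / y) = SignType.sign x := by
  rw [div_eq_mul_inv, sign_mul, sign_pos (inv_pos.2 hy), mul_one]

lemma sign_sq_sub_sq (hx : 0 ≤ x) (hy : 0 < y) :
    SignType.sign (x ^ 2 - y ^ 2) = SignType.sign (x - y) := by
  rw [sq_sub_sq, sign_mul, sign_pos (by linarith : 0 < x + y), one_mul]

end SignLemmas

section KerrNewman

variable {m a q r : ℝ}

lemma Delta_eq_sq_sub (m a q r : ℝ) :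
    Delta m a q r = (r - m) ^ 2 - (m ^ 2 - a ^ 2 - q ^ 2) := by
  unfold Delta; ring

lemma lt_of_rPlus_lt (hr : rPlus m a q < r) : m < r := by
  unfold rPlus at hr
  linarith [Real.sqrt_nonneg (m ^ 2 - a ^ 2 - q ^ 2)]

lemma Delta_pos_of_rPlus_lt (hmaq : a ^ 2 + q ^ 2 ≤ m ^ 2) (hr : rPlus m a q < r) :
    0 < Delta m a q r := by
  have hk : √(m ^ 2 - a ^ 2 - q ^ 2) < r - m := by unfold rPlus at hr; linarith
  have hk2 := pow_lt_pow_left₀ hk (Real.sqrt_nonneg _) two_ne_zero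
  rw [Real.sq_sqrt (by linarith)] at hk2
  rw [Delta_eq_sq_sub]
  linarith

lemma sqrt_Delta_lt (hm : 0 < m) (hmaq : a ^ 2 + q ^ 2 ≤ m ^ 2) (hr : m < r) :
    √(Delta m a q r) < r := by
  rw [Real.sqrt_lt' (by linarith)]
  unfold Delta
  nlinarith

lemma Psi_neg_one_eq {θ : ℝ} (hs : sin θ ≠ 0) (hΔ : 0 < Delta m a q r) :
    Psi m a q (-1) r θ =
      (a * sin θ - √(Delta m a q r)) /
        (sin θ * (r ^ 2 + a ^ 2 - a * sin θ * √(Delta m a q r))) := by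
  have hd : √(Delta m a q r) ≠ 0 := (Real.sqrt_pos.2 hΔ).ne'
  have hnum : -1 / sin θ - -1 * a / √(Delta m a q r) =
      (a * sin θ - √(Delta m a q r)) / sin θ / √(Delta m a q r) := by
    field_simp; ring
  have hden : (r ^ 2 + a ^ 2) / √(Delta m a q r) + -1 * a * sin θ =
      (r ^ 2 + a ^ 2 - a * sin θ * √(Delta m a q r)) / √(Delta m a q r) := by
    field_simp; ring
  rw [Psi, hnum, hden, div_div_div_cancel_right₀ hd, div_div]

lemma sign_Psi_neg_one {θ : ℝ} (hm : 0 < m) (ha : 0 ≤ a) (hmaq : a ^ 2 + q ^ 2 ≤ m ^ 2)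
    (hr : rPlus m a q < r) (hθ0 : 0 < θ) (hθπ : θ < π) :
    SignType.sign (Psi m a q (-1) r θ) =
      SignType.sign (a ^ 2 * sin θ ^ 2 - Delta m a q r) := by
  have hs : 0 < sin θ := sin_pos_of_pos_of_lt_pi hθ0 hθπ
  have hΔ : 0 < Delta m a q r := Delta_pos_of_rPlus_lt hmaq hr
  have hdr : √(Delta m a q r) < r := sqrt_Delta_lt hm hmaq (lt_of_rPlus_lt hr)
  have hr0 : 0 < r := hm.trans (lt_of_rPlus_lt hr)
  have hden : 0 < sin θ * (r ^ 2 + a ^ 2 - a * sin θ * √(Delta m a q r)) := by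
    refine mul_pos hs (sub_pos.2 ?_)
    calc a * sin θ * √(Delta m a q r) ≤ a * r := by
          rw [mul_assoc]
          exact mul_le_mul_of_nonneg_left
            ((mul_le_of_le_one_left (Real.sqrt_nonneg _) (sin_le_one θ)).trans hdr.le) ha
      _ < r ^ 2 + a ^ 2 := by nlinarith [sq_nonneg (r - a)]
  rw [Psi_neg_one_eq hs.ne' hΔ, sign_div_of_pos hden,
    ← sign_sq_sub_sq (mul_nonneg ha hs.le) (Real.sqrt_pos.2 hΔ), mul_pow, Real.sq_sqrt hΔ.le]

end KerrNewman

theorem PsiMinus_sign (m a q : ℝ) (hm : 0 < m) (ha : 0 ≤ a)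
    (hmaq : a ^ 2 + q ^ 2 ≤ m ^ 2) (r θ : ℝ) (hr : rPlus m a q < r)
    (hθ0 : 0 < θ) (hθπ : θ < π) :
    (Psi m a q (-1) r θ < 0 ↔ a ^ 2 * Real.sin θ ^ 2 < Delta m a q r) ∧
    (0 < Psi m a q (-1) r θ ↔ Delta m a q r < a ^ 2 * Real.sin θ ^ 2) ∧
    (Psi m a q (-1) r θ = 0 ↔ Delta m a q r = a ^ 2 * Real.sin θ ^ 2) := by
  have h := sign_Psi_neg_one hm ha hmaq hr hθ0 hθπ
  refine ⟨?_, ?_, ?_⟩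
  · rw [← sign_eq_neg_one_iff, h, sign_eq_neg_one_iff, sub_neg]
  · rw [← sign_eq_one_iff, h, sign_eq_one_iff, sub_pos]
  · rw [← _root_.sign_eq_zero_iff, h, _root_.sign_eq_zero_iff, sub_eq_zero, eq_comm]
end
end

section
/- For r > r₊ and θ = 0 (on the rotation axis, where ρ² = r² + a²), the defining condition of the photon region K, namely |2rΔ − (r−m)ρ²| ≤ 2ar√Δ sin θ, holds if and only if r³ − 3mr² + (a² + 2q²)r + a²m = 0; i.e., the photon region meets the axis exactly at the roots r > r₊ of this cubic. -/
noncomputable section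

open Real

theorem two_mul_Delta_sub_mul_rhoSq_zero (m a q r : ℝ) :
    2 * r * Delta m a q r - (r - m) * rhoSq a r 0
      = r ^ 3 - 3 * m * r ^ 2 + (a ^ 2 + 2 * q ^ 2) * r + a ^ 2 * m := by
  simp only [Delta, rhoSq, cos_zero]
  ring

theorem photon_region_meets_axis_general (m a q : ℝ) (r : ℝ) :
    |2 * r * Delta m a q r - (r - m) * rhoSq a r 0|
        ≤ 2 * a * r * Real.sqrt (Delta m a q r) * Real.sin 0 ↔
      r ^ 3 - 3 * m * r ^ 2 + (a ^ 2 + 2 * q ^ 2) * r + a ^ 2 * m = 0 := by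
  rw [two_mul_Delta_sub_mul_rhoSq_zero, sin_zero, mul_zero, abs_nonpos_iff]

theorem photon_region_meets_axis (m a q : ℝ) (hm : 0 < m) (ha : 0 ≤ a)
    (hmaq : a ^ 2 + q ^ 2 ≤ m ^ 2) (r : ℝ) (hr : rPlus m a q < r) :
    |2 * r * Delta m a q r - (r - m) * rhoSq a r 0|
        ≤ 2 * a * r * Real.sqrt (Delta m a q r) * Real.sin 0 ↔
      r ^ 3 - 3 * m * r ^ 2 + (a ^ 2 + 2 * q ^ 2) * r + a ^ 2 * m = 0 :=
  photon_region_meets_axis_general m a q r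
end
end
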